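/- arXiv:2201.07553 — 4 statements merged into one kernel-verified Lean document; each statement's English description precedes it below -/
import Mathlib

section
/- Let G be a group of order n and let D be an (n, mk, λ)-difference set in G that is partitioned by a collection S' = {D₁, …, D_m} of m pairwise disjoint k-subsets. Then S' is an (n, m, k, μ)-disjoint difference family if and only if S' is an (n, m, k, λ−μ)-external difference family. -/
open Finset

section Defs

variable {G : Type*} [AddGroup G] [DecidableEq G]

/-- The multiset of internal differences `x - y` (`x ≠ y`) of a finset. -/
def intDiff (D : Finset G) : Multiset G :=
  ((D ×ˢ D).filter fun p => p.1 ≠ p.2).val.map fun p => p.1 - p.2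

/-- The multiset of external differences `x - y`, `x ∈ D₁`, `y ∈ D₂`. -/
def extDiff (D₁ D₂ : Finset G) : Multiset G :=
  (D₁ ×ˢ D₂).val.map fun p => p.1 - p.2

variable {ι : Type*} [Fintype ι] [DecidableEq ι]

/-- The multiset of all internal differences of a family of sets. -/
def famInt (D : ι → Finset G) : Multiset G := ∑ i, intDiff (D i)

/-- The multiset of all external differences between distinct members of a family of sets. -/
def famExt (D : ι → Finset G) : Multiset G :=
  ∑ i, ∑ j, if j = i then 0 else extDiff (D i) (D j)

/-- The union of the members of a family of sets. -/
def famU (D : ι → Finset G) : Finset G := Finset.univ.biUnion D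

variable [Fintype G]

/-- `D` is an `(n,k,λ)`-difference set: `Δ(D) = λ(G*)`. -/
def IsDS (n k : ℕ) (lam : ℤ) (D : Finset G) : Prop :=
  Fintype.card G = n ∧ D.card = k ∧
    ∀ x : G, ((intDiff D).count x : ℤ) = if x = 0 then 0 else lam

/-- `P` is an `(n,k,λ,μ)`-partial difference set: `Δ(P) = λ(P) + μ(G* \ P)`. -/
def IsPDS (n k : ℕ) (lam mu : ℤ) (P : Finset G) : Prop :=
  Fintype.card G = n ∧ P.card = k ∧
    ∀ x : G, ((intDiff P).count x : ℤ) =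
      if x ∈ P then lam else if x = 0 then 0 else mu

/-- `D` is a family of `m` pairwise disjoint `k`-subsets of a group of order `n`. -/
def FamShape (n m k : ℕ) (D : ι → Finset G) : Prop :=
  Fintype.card G = n ∧ Fintype.card ι = m ∧ (∀ i, (D i).card = k) ∧
    ∀ i j, i ≠ j → Disjoint (D i) (D j)

/-- `(n,m,k,λ)`-disjoint difference family: `⋃ᵢ Δ(Dᵢ) = λ(G*)`. -/
def IsDDF (n m k : ℕ) (lam : ℤ) (D : ι → Finset G) : Prop :=
  FamShape n m k D ∧
    ∀ x : G, ((famInt D).count x : ℤ) = if x = 0 then 0 else lam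

/-- `(n,m,k,λ)`-external difference family: `⋃_{i≠j} Δ(Dᵢ,Dⱼ) = λ(G*)`. -/
def IsEDF (n m k : ℕ) (lam : ℤ) (D : ι → Finset G) : Prop :=
  FamShape n m k D ∧
    ∀ x : G, ((famExt D).count x : ℤ) = if x = 0 then 0 else lam

/-- `(n,m,k,λ,μ)`-disjoint partial difference family:
sets in `G*`, `⋃ᵢ Δ(Dᵢ) = λ(S) + μ(G* \ S)` where `S = ⋃ᵢ Dᵢ`. -/
def IsDPDF (n m k : ℕ) (lam mu : ℤ) (D : ι → Finset G) : Prop :=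
  FamShape n m k D ∧ (∀ i, (0 : G) ∉ D i) ∧
    ∀ x : G, ((famInt D).count x : ℤ) =
      if x ∈ famU D then lam else if x = 0 then 0 else mu

/-- `(n,m,k,λ,μ)`-external partial difference family:
sets in `G*`, `⋃_{i≠j} Δ(Dᵢ,Dⱼ) = λ(S) + μ(G* \ S)` where `S = ⋃ᵢ Dᵢ`. -/
def IsEPDF (n m k : ℕ) (lam mu : ℤ) (D : ι → Finset G) : Prop :=
  FamShape n m k D ∧ (∀ i, (0 : G) ∉ D i) ∧
    ∀ x : G, ((famExt D).count x : ℤ) =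
      if x ∈ famU D then lam else if x = 0 then 0 else mu

end Defs

section FieldDefs

variable {F : Type*} [Field F] [DecidableEq F]

/-- `α` is a primitive element: every nonzero element is a power of `α`. -/
def IsPrimitiveElt (α : F) : Prop := ∀ x : F, x ≠ 0 → ∃ k : ℕ, x = α ^ k

/-- The coset `α^i⟨α^e⟩` of the cyclotomic class of order `e` (of size `f`). -/
def cyclo (α : F) (e f i : ℕ) : Finset F :=
  (Finset.range f).image fun j => α ^ (i + e * j)

/-- The cyclotomic number `(i,j)_e`: the number of pairs `(zᵢ, zⱼ) ∈ Cᵢ × Cⱼ` with `zᵢ + 1 = zⱼ`. -/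
def cycNum (α : F) (e f i j : ℕ) : ℕ :=
  ((cyclo α e f i ×ˢ cyclo α e f j).filter fun p => p.1 + 1 = p.2).card

/-- `Φᵢ = {x ∈ C₀^e : x ≠ 1, x - 1 ∈ α^i C₀^ε}`. -/
def Phi (α : F) (e f ε ρ i : ℕ) : Finset F :=
  (cyclo α e f 0).filter fun x => x ≠ 1 ∧ x - 1 ∈ cyclo α ε ρ i

/-- `φᵢ = |Φᵢ|`. -/
def phi (α : F) (e f ε ρ i : ℕ) : ℕ := (Phi α e f ε ρ i).card

end FieldDefs

lemma Finset.val_map_eq_sum_singleton {α β : Type*} (s : Finset α) (f : α → β) :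
    s.val.map f = ∑ a ∈ s, {f a} := by
  rw [sum_eq_multiset_sum, ← Multiset.sum_map_singleton (s.val.map f), Multiset.map_map]
  rfl

section Partition

open Function

variable {G ι : Type*}

lemma sum_famU_sum_famU [DecidableEq G] [Fintype ι] {M : Type*} [AddCommMonoid M]
    {D : ι → Finset G} (hD : Pairwise (Disjoint on D)) (f : G → G → M) :
    ∑ x ∈ famU D, ∑ y ∈ famU D, f x y = ∑ i, ∑ j, ∑ x ∈ D i, ∑ y ∈ D j, f x y := by
  simp only [famU, sum_biUnion (hD.set_pairwise _)]
  exact sum_congr rfl fun i _ => sum_comm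

variable [AddGroup G]

lemma extDiff_eq_sum (A B : Finset G) : extDiff A B = ∑ x ∈ A, ∑ y ∈ B, {x - y} := by
  rw [extDiff, Finset.val_map_eq_sum_singleton, sum_product]

variable [DecidableEq G]

lemma intDiff_eq_sum (D : Finset G) :
    intDiff D = ∑ x ∈ D, ∑ y ∈ D, if x = y then 0 else {x - y} := by
  rw [intDiff, filter_val, ← filter_val, Finset.val_map_eq_sum_singleton,
    sum_filter, sum_product]
  simp only [ite_not]

/-- An ordered pair of distinct elements of a disjoint union lies either inside one block or in
two different blocks. -/
lemma intDiff_famU [Fintype ι] [DecidableEq ι] {D : ι → Finset G}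
    (hD : Pairwise (Disjoint on D)) : intDiff (famU D) = famInt D + famExt D := by
  have hblock (i j : ι) :
      (∑ x ∈ D i, ∑ y ∈ D j, if x = y then 0 else {x - y}) =
        (if j = i then intDiff (D i) else 0) + if j = i then 0 else extDiff (D i) (D j) := by
    by_cases hji : j = i
    · subst hji
      simp [intDiff_eq_sum]
    · have hne (x) (hx : x ∈ D i) (y) (hy : y ∈ D j) : x ≠ y :=
        fun hxy => disjoint_left.1 (hD (Ne.symm hji)) hx (hxy ▸ hy)
      simp only [if_neg hji, zero_add, extDiff_eq_sum]
      exact sum_congr rfl fun x hx => sum_congr rfl fun y hy => if_neg (hne x hx y hy)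
  rw [intDiff_eq_sum, sum_famU_sum_famU hD]
  simp only [hblock, sum_add_distrib, sum_ite_eq', mem_univ, if_true]
  rfl

end Partition

/-- Theorem (DS partitioned): if an `(n, m*k, λ)`-difference set is partitioned by a family of
`m` pairwise disjoint `k`-subsets `D`, then `D` is an `(n,m,k,μ)`-DDF iff it is an
`(n,m,k,λ-μ)`-EDF. -/
theorem ds_partition_ddf_iff_edf {G : Type*} [AddGroup G] [DecidableEq G] [Fintype G]
    (n m k : ℕ) (lam mu : ℤ) (D : Fin m → Finset G)
    (hdisj : ∀ i j, i ≠ j → Disjoint (D i) (D j))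
    (hcard : ∀ i, (D i).card = k)
    (hDS : IsDS n (m * k) lam (famU D)) :
    IsDDF n m k mu D ↔ IsEDF n m k (lam - mu) D := by
  obtain ⟨hn, -, hcount⟩ := hDS
  have hshape : FamShape n m k D := ⟨hn, Fintype.card_fin m, hcard, hdisj⟩
  have hsplit (x : G) :
      ((famInt D).count x : ℤ) + (famExt D).count x = if x = 0 then 0 else lam := by
    rw [← hcount x, intDiff_famU fun i j => hdisj i j, Multiset.count_add, Nat.cast_add]
  simp only [IsDDF, IsEDF, hshape, true_and]
  refine forall_congr' fun x => ?_
  have hx := hsplit x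
  split_ifs at hx ⊢ <;> omega
end

section
/- Let G be a group of order n and suppose A₁, …, A_m is a partition of G* such that for each 1 ≤ h ≤ ℓ there are exactly c_h of the subsets of cardinality k_h (with m = Σ_h c_h). Then {A₁,…,A_m} is an (n, m; c₁,…,c_ℓ; k₁,…,k_ℓ; λ₁,…,λ_ℓ)-partitioned external difference family if and only if, for every 1 ≤ h ≤ ℓ, the c_h subsets of cardinality k_h form an (n, c_h, k_h, c_h k_h − λ_h − 1, c_h k_h − λ_h)-disjoint partial difference family in G. -/
open Finset

/-!
Fix a block `A i` of the partition of `G*` and an `x ≠ 0`. Every `a ∈ A i` with `a ≠ x` is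
`x + b` for a unique `b = -x + a ≠ 0`, and `b` lies in exactly one block: in `A i` itself (an
internal difference) or in another block (an external difference). Hence
`ext_i(x) + int_i(x) + [x ∈ A i] = |A i|` for the multiplicities of `x` among the external
and internal differences of `A i`. Summing over the `c h` blocks of size `k h`, with union `S_h`,
gives `E_h(x) + I_h(x) + [x ∈ S_h] = c h * k h` on `G*`, which turns either family condition
into the other.
-/

lemma Finset.biUnion_val_of_pairwiseDisjoint {α ι : Type*} [DecidableEq α] {s : Finset ι}
    {A : ι → Finset α} (h : (s : Set ι).PairwiseDisjoint A) :
    (s.biUnion A).val = ∑ i ∈ s, (A i).val := by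
  rw [← Finset.disjiUnion_eq_biUnion _ _ h]; rfl

section Differences

variable {G : Type*} [AddGroup G] [DecidableEq G]

lemma count_extDiff (D₁ D₂ : Finset G) (x : G) :
    (extDiff D₁ D₂).count x = #{a ∈ D₁ | -x + a ∈ D₂} := by
  rw [extDiff, Multiset.count_map, ← Finset.filter_val, Finset.card_val,
    Finset.card_filter, Finset.sum_product, Finset.card_filter]
  refine Finset.sum_congr rfl fun a _ => ?_
  have hsolve : ∀ b : G, x = a - b ↔ b = -x + a := fun b => by
    rw [eq_sub_iff_add_eq, eq_neg_add_iff_add_eq]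
  simp_rw [hsolve]
  exact Finset.sum_ite_eq' _ _ _

lemma extDiff_self (D : Finset G) : extDiff D D = intDiff D + Multiset.replicate #D 0 := by
  have hdiag : ((D ×ˢ D).val.filter fun p => ¬p.1 ≠ p.2).map (fun p => p.1 - p.2)
      = Multiset.replicate #D 0 := by
    refine Multiset.eq_replicate.mpr ⟨?_, ?_⟩
    · rw [Multiset.card_map, ← Finset.filter_val, Finset.card_val]
      simpa only [not_not, ← Finset.diag_eq_filter] using D.diag_card
    · simp
  rw [extDiff, intDiff, ← hdiag, Finset.filter_val, ← Multiset.map_add, Multiset.filter_add_not]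

end Differences

section Family

open Function

variable {G : Type*} [AddGroup G] [DecidableEq G]

lemma extDiff_biUnion {ι : Type*} [DecidableEq ι] (D : Finset G) {s : Finset ι}
    {A : ι → Finset G} (h : (s : Set ι).PairwiseDisjoint A) :
    extDiff D (s.biUnion A) = ∑ j ∈ s, extDiff D (A j) := by
  let extDiffHom : Multiset G →+ Multiset G :=
    { toFun := fun t => (D.val ×ˢ t).map fun p => p.1 - p.2
      map_zero' := by simp
      map_add' := fun t u => by rw [Multiset.product_add, Multiset.map_add] }
  exact (congrArg extDiffHom (Finset.biUnion_val_of_pairwiseDisjoint h)).trans (map_sum _ _ _)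

lemma count_extDiff_erase_zero [Fintype G] (D : Finset G) (x : G) :
    (extDiff D (univ.erase 0)).count x + D.val.count x = #D := by
  have hne : ∀ a : G, -x + a ∈ univ.erase 0 ↔ a ≠ x := fun a => by
    rw [mem_erase, and_iff_left (mem_univ _), Ne, neg_add_eq_zero, eq_comm]
  rw [count_extDiff, Multiset.count_eq_of_nodup D.nodup]
  simp_rw [hne, Finset.filter_ne', Finset.mem_val]
  split_ifs with hx
  · exact card_erase_add_one hx
  · rw [erase_eq_of_notMem hx, add_zero]

variable {ι : Type*} [Fintype ι] [DecidableEq ι]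

lemma sum_extDiff_ne_add_extDiff_self {A : ι → Finset G} (hA : Pairwise (Disjoint on A))
    (i : ι) :
    (∑ j, if j = i then 0 else extDiff (A i) (A j)) + extDiff (A i) (A i)
      = extDiff (A i) (famU A) := by
  rw [famU, extDiff_biUnion _ (hA.set_pairwise _), ← Finset.sum_erase_add _ _ (mem_univ i),
    ← Finset.sum_erase_add _ _ (mem_univ i), if_pos rfl, add_zero]
  congr 1
  exact Finset.sum_congr rfl fun j hj => if_neg (ne_of_mem_erase hj)

lemma count_sum_extDiff_ne_add_count_sum_intDiff [Fintype G] {A : ι → Finset G}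
    (hA : Pairwise (Disjoint on A)) (hpart : famU A = univ.erase 0) (T : Finset ι) (x : G) :
    (∑ i ∈ T, ∑ j, if j = i then 0 else extDiff (A i) (A j)).count x
      + (∑ i ∈ T, intDiff (A i)).count x + (if x = 0 then ∑ i ∈ T, #(A i) else 0)
      + (T.biUnion A).val.count x = ∑ i ∈ T, #(A i) := by
  have hsplit : ∀ i, (∑ j, if j = i then 0 else extDiff (A i) (A j)) + intDiff (A i)
      + Multiset.replicate #(A i) 0 = extDiff (A i) (univ.erase 0) := fun i => by
    rw [add_assoc, ← extDiff_self, sum_extDiff_ne_add_extDiff_self hA, hpart]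
  have hzero : (if x = 0 then ∑ i ∈ T, #(A i) else 0)
      = ∑ i ∈ T, (Multiset.replicate #(A i) (0 : G)).count x := by
    simp only [Multiset.count_replicate, eq_comm (a := (0 : G)), Finset.sum_ite_irrel,
      Finset.sum_const_zero]
  rw [hzero, Finset.biUnion_val_of_pairwiseDisjoint (hA.set_pairwise _)]
  calc _ = ∑ i ∈ T, (((∑ j, if j = i then 0 else extDiff (A i) (A j)) + intDiff (A i)
          + Multiset.replicate #(A i) 0).count x + (A i).val.count x) := by
        simp only [Multiset.count_sum', Multiset.count_add, Finset.sum_add_distrib]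
    _ = ∑ i ∈ T, #(A i) := by
        simp only [hsplit, count_extDiff_erase_zero]

end Family

theorem pedf_iff_dpdf_partition_general {G : Type*} [AddGroup G] [DecidableEq G] [Fintype G]
    (m L : ℕ) (A : Fin m → Finset G) (c k : Fin L → ℕ) (lam : Fin L → ℤ)
    (hdisj : ∀ i j, i ≠ j → Disjoint (A i) (A j))
    (hpart : famU A = Finset.univ.erase (0 : G))
    (hc : ∀ h, (Finset.univ.filter fun i => (A i).card = k h).card = c h) :
    ((∀ h, ∀ x : G,
        (((∑ i ∈ Finset.univ.filter (fun i => (A i).card = k h),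
            ∑ j, if j = i then 0 else extDiff (A i) (A j)).count x : ℤ))
          = if x = 0 then 0 else lam h)
      ↔
     (∀ h, ∀ x : G,
        (((∑ i ∈ Finset.univ.filter (fun i => (A i).card = k h),
            intDiff (A i)).count x : ℤ))
          = if x ∈ (Finset.univ.filter (fun i => (A i).card = k h)).biUnion A
            then (c h : ℤ) * (k h : ℤ) - lam h - 1
            else if x = 0 then 0 else (c h : ℤ) * (k h : ℤ) - lam h)) := by
  refine forall_congr' fun h => forall_congr' fun x => ?_
  set T := Finset.univ.filter fun i => (A i).card = k h
  have hsize : ∑ i ∈ T, #(A i) = c h * k h := by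
    rw [Finset.sum_congr rfl fun i hi => (Finset.mem_filter.mp hi).2, Finset.sum_const, hc,
      smul_eq_mul]
  have hcount := count_sum_extDiff_ne_add_count_sum_intDiff (fun i j => hdisj i j) hpart T x
  simp only [hsize, Multiset.count_eq_of_nodup (T.biUnion A).nodup, Finset.mem_val] at hcount
  simp only [← Nat.cast_mul]
  -- at `x = 0` the identity `E + I + c h * k h + [0 ∈ S] = c h * k h` forces all three to vanish
  split_ifs at hcount ⊢ <;> omega

/-- Theorem: a partition `A₁,…,A_m` of `G*` with `c h` subsets of cardinality `k h`
(distinct sizes, `m = ∑ c h`) is an `(n,m;c;k;λ)`-PEDF iff for each `h` the subsets of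
cardinality `k h` form an `(n, c h, k h, c h * k h - λ h - 1, c h * k h - λ h)`-DPDF. -/
theorem pedf_iff_dpdf_partition {G : Type*} [AddGroup G] [DecidableEq G] [Fintype G]
    (n m L : ℕ) (A : Fin m → Finset G) (c k : Fin L → ℕ) (lam : Fin L → ℤ)
    (hn : Fintype.card G = n)
    (hdisj : ∀ i j, i ≠ j → Disjoint (A i) (A j))
    (hpart : famU A = Finset.univ.erase (0 : G))
    (hkinj : Function.Injective k)
    (hall : ∀ i, ∃ h, (A i).card = k h)
    (hc : ∀ h, (Finset.univ.filter fun i => (A i).card = k h).card = c h)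
    (hm : m = ∑ h, c h) :
    ((∀ h, ∀ x : G,
        (((∑ i ∈ Finset.univ.filter (fun i => (A i).card = k h),
            ∑ j, if j = i then 0 else extDiff (A i) (A j)).count x : ℤ))
          = if x = 0 then 0 else lam h)
      ↔
     (∀ h, ∀ x : G,
        (((∑ i ∈ Finset.univ.filter (fun i => (A i).card = k h),
            intDiff (A i)).count x : ℤ))
          = if x ∈ (Finset.univ.filter (fun i => (A i).card = k h)).biUnion A
            then (c h : ℤ) * (k h : ℤ) - lam h - 1
            else if x = 0 then 0 else (c h : ℤ) * (k h : ℤ) - lam h)) :=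
  pedf_iff_dpdf_partition_general m L A c k lam hdisj hpart hc
end

section
/- Let q = ef + 1 = ερ + 1 be a prime power with e, f, ε, ρ > 1 and ε | e. (i) If φ₁ = φ₂ = ⋯ = φ_{ε−1}, then Int(C₀^ε′) = φ₀(C₀^ε) + φ₁(G* \ C₀^ε) as multisets, i.e. C₀^ε′ is a disjoint partial difference family (and C₀^ε is a partial difference set when ε = e). (ii) If φ₀ = φ₁ = ⋯ = φ_{ε−1}, then Int(C₀^ε′) = φ₀(G*) as multisets, i.e. C₀^ε′ is a disjoint difference family (and C₀^ε is a difference set when ε = e). -/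
/-!
Fix `x ≠ 0` and let `m` be its class modulo `C₀^ε`, i.e. `x ∈ α^m C₀^ε`. Since each `C_{iε}^e` is a
coset of `C₀^e`, a representation `x = u - v` with `u, v` in a common `C_{iε}^e` is determined by
`c = u / v ∈ C₀^e \ {1}`: then `v = x / (c - 1)`, and this lies in `C₀^ε` exactly when `c - 1` lies
in the class of `x`. So `x` occurs in `Int(C₀^ε′)` exactly `φ_m` times, and the hypotheses on the
`φ_j` make this count depend only on whether `m = 0`.
-/

open Finset

section DifferenceCounts

variable {G : Type*} [DecidableEq G] {ι : Type*} [Fintype ι]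

theorem famU_of_forall_eq {D : ι → Finset G} {i : ι} (h : ∀ j, j = i) : famU D = D i := by
  ext x
  simp only [famU, mem_biUnion, mem_univ, true_and]
  exact ⟨fun ⟨j, hj⟩ => h j ▸ hj, fun hx => ⟨i, hx⟩⟩

variable [AddGroup G]

theorem count_intDiff_of_ne_zero (D : Finset G) {x : G} (hx : x ≠ 0) :
    (intDiff D).count x = #{p ∈ D ×ˢ D | p.1 - p.2 = x} := by
  rw [intDiff, Multiset.count_map, ← Finset.filter_val, Finset.filter_filter]
  refine congrArg Finset.card (Finset.filter_congr fun p _ => ?_)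
  rw [eq_comm, and_iff_right_iff_imp]
  rintro rfl h
  exact hx (by rw [h, sub_self])

theorem count_intDiff_zero (D : Finset G) : (intDiff D).count 0 = 0 := by
  simp [intDiff, sub_eq_zero]

theorem count_famInt_zero (D : ι → Finset G) : (famInt D).count 0 = 0 := by
  simp [famInt, Multiset.count_sum', count_intDiff_zero]

theorem famInt_of_forall_eq {D : ι → Finset G} {i : ι} (h : ∀ j, j = i) :
    famInt D = intDiff (D i) :=
  Fintype.sum_eq_single i fun j hj => absurd (h j) hj

variable [Fintype G] {n m k : ℕ} {lam mu : ℤ} {D : ι → Finset G}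

theorem IsDPDF.isPDS_famU (hD : IsDPDF n m k lam mu D) (hm : m = 1) :
    IsPDS n k lam mu (famU D) := by
  obtain ⟨⟨hn, hcard, hk, -⟩, -, hcount⟩ := hD
  obtain ⟨i, hi⟩ := Fintype.card_eq_one_iff.mp (hcard.trans hm)
  rw [famU_of_forall_eq hi] at hcount ⊢
  rw [famInt_of_forall_eq hi] at hcount
  exact ⟨hn, hk i, hcount⟩

theorem IsDDF.isDS_famU (hD : IsDDF n m k lam D) (hm : m = 1) : IsDS n k lam (famU D) := by
  obtain ⟨⟨hn, hcard, hk, -⟩, hcount⟩ := hD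
  obtain ⟨i, hi⟩ := Fintype.card_eq_one_iff.mp (hcard.trans hm)
  rw [famInt_of_forall_eq hi] at hcount
  rw [famU_of_forall_eq hi]
  exact ⟨hn, hk i, hcount⟩

end DifferenceCounts

section CosetCount

variable {F : Type*} [Field F]

theorem div_div_sub_one_of_sub_eq {u v x : F} (hv : v ≠ 0) (hx : x ≠ 0) (h : u - v = x) :
    x / (u / v - 1) = v := by
  subst h
  have : u / v - 1 ≠ 0 := by
    rwa [sub_ne_zero, ne_eq, div_eq_one_iff_eq hv, ← sub_eq_zero]
  field_simp

variable [DecidableEq F] {ι : Type*} [Fintype ι]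

theorem count_famInt_eq_card_filter (D : ι → Finset F) (H : Finset F)
    (hdisj : ∀ i j, i ≠ j → Disjoint (D i) (D j)) (h0 : ∀ i, (0 : F) ∉ D i)
    (hcoset : ∀ i, ∀ v ∈ D i, ∀ u, u ∈ D i ↔ u / v ∈ H) {x : F} (hx : x ≠ 0) :
    (famInt D).count x = #{c ∈ H | c ≠ 1 ∧ x / (c - 1) ∈ famU D} := by
  rw [famInt, Multiset.count_sum',
    Finset.sum_congr rfl fun i _ => count_intDiff_of_ne_zero _ hx, ← Finset.card_sigma]
  refine Finset.card_bij (fun p _ => p.2.1 / p.2.2) ?_ ?_ ?_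
  · rintro ⟨i, u, v⟩ hp
    simp only [mem_sigma, mem_univ, true_and, mem_filter, mem_product] at hp
    obtain ⟨⟨hu, hv⟩, hdiff⟩ := hp
    have hv0 : v ≠ 0 := fun h => h0 i (h ▸ hv)
    refine mem_filter.mpr ⟨(hcoset i v hv u).mp hu, fun (h : u / v = 1) => hx ?_, ?_⟩
    · rw [← hdiff, (div_eq_one_iff_eq hv0).mp h, sub_self]
    · rw [div_div_sub_one_of_sub_eq hv0 hx hdiff]
      exact mem_biUnion.mpr ⟨i, mem_univ _, hv⟩
  · rintro ⟨i, u, v⟩ hp ⟨i', u', v'⟩ hp' hquot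
    simp only [mem_sigma, mem_univ, true_and, mem_filter, mem_product] at hp hp' hquot
    obtain ⟨⟨hu, hv⟩, hdiff⟩ := hp
    obtain ⟨⟨hu', hv'⟩, hdiff'⟩ := hp'
    have hvv' : v = v' := by
      rw [← div_div_sub_one_of_sub_eq (fun h => h0 i (h ▸ hv)) hx hdiff,
        ← div_div_sub_one_of_sub_eq (fun h => h0 i' (h ▸ hv')) hx hdiff', hquot]
    obtain rfl : i = i' := by
      by_contra hii'
      exact disjoint_left.mp (hdisj i i' hii') hv (hvv' ▸ hv')
    obtain rfl : u = u' := by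
      rw [sub_eq_iff_eq_add.mp hdiff, sub_eq_iff_eq_add.mp hdiff', hvv']
    rw [hvv']
  · intro c hc
    obtain ⟨hcH, hc1, hv⟩ := mem_filter.mp hc
    obtain ⟨i, -, hv⟩ := mem_biUnion.mp hv
    set v := x / (c - 1)
    have hv0 : v ≠ 0 := fun h => h0 i (h ▸ hv)
    have hcv : c * v / v = c := mul_div_cancel_right₀ c hv0
    refine ⟨⟨i, c * v, v⟩, ?_, hcv⟩
    simp only [mem_sigma, mem_univ, true_and, mem_filter, mem_product]
    refine ⟨⟨(hcoset i v hv _).mpr (by rwa [hcv]), hv⟩, ?_⟩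
    rw [← sub_one_mul, mul_comm, div_mul_cancel₀ x (sub_ne_zero.mpr hc1)]

end CosetCount

section Cyclotomic

variable {F : Type*} [Field F] {α : F} {e f : ℕ}

theorem ne_zero_of_orderOf_eq_mul (hord : orderOf α = e * f) (he : 0 < e) (hf : 0 < f) :
    α ≠ 0 := by
  rintro rfl
  exact (Nat.mul_pos he hf).ne (by rw [← hord, orderOf_zero])

variable [DecidableEq F]

theorem pow_mem_cyclo_iff (hord : orderOf α = e * f) (he : 0 < e) (hf : 0 < f) {k m : ℕ} :
    α ^ k ∈ cyclo α e f m ↔ k ≡ m [MOD e] := by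
  have hfin : IsOfFinOrder α := orderOf_pos_iff.mp (hord ▸ Nat.mul_pos he hf)
  simp only [cyclo, mem_image, mem_range, hfin.pow_eq_pow_iff_modEq, hord]
  constructor
  · rintro ⟨j, -, hj⟩
    calc k ≡ m + e * j [MOD e] := (hj.of_mul_right f).symm
      _ ≡ m [MOD e] := by simp [Nat.ModEq, Nat.add_mul_mod_self_left]
  · intro h
    obtain ⟨t, ht⟩ := Nat.modEq_iff_dvd.mp h.symm
    have hf' : (0 : ℤ) < f := by exact_mod_cast hf
    refine ⟨(t % f).toNat, (Int.toNat_lt (Int.emod_nonneg t hf'.ne')).mpr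
      (Int.emod_lt_of_pos t hf'), Nat.modEq_iff_dvd.mpr ⟨t / f, ?_⟩⟩
    push_cast [Int.toNat_of_nonneg (Int.emod_nonneg t hf'.ne')]
    linear_combination ht - (e : ℤ) * Int.emod_add_mul_ediv t f

theorem exists_pow_of_mem_cyclo {m : ℕ} {x : F} (hx : x ∈ cyclo α e f m) : ∃ k, x = α ^ k := by
  obtain ⟨j, -, rfl⟩ := mem_image.mp hx
  exact ⟨_, rfl⟩

theorem zero_notMem_cyclo (hα0 : α ≠ 0) (m : ℕ) : (0 : F) ∉ cyclo α e f m := fun h => by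
  obtain ⟨k, hk⟩ := exists_pow_of_mem_cyclo h
  exact pow_ne_zero k hα0 hk.symm

theorem card_cyclo (hord : orderOf α = e * f) (he : 0 < e) (hf : 0 < f) (m : ℕ) :
    #(cyclo α e f m) = f := by
  have hfin : IsOfFinOrder α := orderOf_pos_iff.mp (hord ▸ Nat.mul_pos he hf)
  rw [cyclo, card_image_of_injOn, card_range]
  intro j hj j' hj' h
  rw [hfin.pow_eq_pow_iff_modEq, hord] at h
  exact ((h.add_left_cancel' m).mul_left_cancel' he.ne').eq_of_lt_of_lt (by simpa using hj)
    (by simpa using hj')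

theorem disjoint_cyclo (hord : orderOf α = e * f) (he : 0 < e) (hf : 0 < f) {m n : ℕ}
    (hmn : ¬m ≡ n [MOD e]) : Disjoint (cyclo α e f m) (cyclo α e f n) := by
  refine disjoint_left.mpr fun x hm hn => hmn ?_
  obtain ⟨k, rfl⟩ := exists_pow_of_mem_cyclo hm
  exact ((pow_mem_cyclo_iff hord he hf).mp hm).symm.trans ((pow_mem_cyclo_iff hord he hf).mp hn)

theorem mul_mem_cyclo (hord : orderOf α = e * f) (he : 0 < e) (hf : 0 < f) {m n : ℕ} {x y : F}
    (hx : x ∈ cyclo α e f m) (hy : y ∈ cyclo α e f n) : x * y ∈ cyclo α e f (m + n) := by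
  obtain ⟨k, rfl⟩ := exists_pow_of_mem_cyclo hx
  obtain ⟨l, rfl⟩ := exists_pow_of_mem_cyclo hy
  rw [pow_mem_cyclo_iff hord he hf] at hx hy
  rw [← pow_add, pow_mem_cyclo_iff hord he hf]
  exact hx.add hy

theorem div_mem_cyclo (hα : IsPrimitiveElt α) (hord : orderOf α = e * f) (he : 0 < e)
    (hf : 0 < f) {m n : ℕ} {x y : F} (hx : x ∈ cyclo α e f (m + n)) (hy : y ∈ cyclo α e f n) :
    x / y ∈ cyclo α e f m := by
  have hα0 := ne_zero_of_orderOf_eq_mul hord he hf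
  have hy0 : y ≠ 0 := fun h => zero_notMem_cyclo hα0 n (h ▸ hy)
  have hx0 : x ≠ 0 := fun h => zero_notMem_cyclo hα0 _ (h ▸ hx)
  obtain ⟨k, hk⟩ := hα (x / y) (div_ne_zero hx0 hy0)
  obtain ⟨l, rfl⟩ := exists_pow_of_mem_cyclo hy
  rw [← div_mul_cancel₀ x hy0, hk, ← pow_add, pow_mem_cyclo_iff hord he hf] at hx
  rw [hk, pow_mem_cyclo_iff hord he hf]
  exact Nat.ModEq.add_right_cancel ((pow_mem_cyclo_iff hord he hf).mp hy) hx

theorem exists_mem_cyclo_lt (hα : IsPrimitiveElt α) (hord : orderOf α = e * f) (he : 0 < e)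
    (hf : 0 < f) {x : F} (hx : x ≠ 0) : ∃ m < e, x ∈ cyclo α e f m := by
  obtain ⟨k, rfl⟩ := hα x hx
  exact ⟨k % e, Nat.mod_lt k he, (pow_mem_cyclo_iff hord he hf).mpr (Nat.mod_modEq k e).symm⟩

theorem mem_cyclo_zero_iff (hord : orderOf α = e * f) (he : 0 < e) (hf : 0 < f) {m : ℕ}
    (hm : m < e) {x : F} (hx : x ∈ cyclo α e f m) : x ∈ cyclo α e f 0 ↔ m = 0 := by
  refine ⟨fun hx0 => by_contra fun hm0 => ?_, fun h => h ▸ hx⟩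
  exact disjoint_left.mp (disjoint_cyclo hord he hf fun h => hm0 (h.eq_of_lt_of_lt hm he)) hx hx0

end Cyclotomic

section Partition

variable {F : Type*} [Field F] [DecidableEq F] {α : F} {e f eps rho : ℕ}

/-- The family `C₀^ε′ = {C_{iε}^e : 0 ≤ i < e/ε}` of classes of order `e` partitioning `C₀^ε`. -/
def cycloPartition (α : F) (e f eps : ℕ) : Fin (e / eps) → Finset F :=
  fun i => cyclo α e f (eps * (i : ℕ))

theorem mem_cyclo_of_dvd (hord : orderOf α = eps * rho) (heps : 0 < eps) (hrho : 0 < rho)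
    (hd : eps ∣ e) {m n : ℕ} (hmn : m ≡ n [MOD eps]) {x : F} (hx : x ∈ cyclo α e f m) :
    x ∈ cyclo α eps rho n := by
  obtain ⟨j, -, rfl⟩ := mem_image.mp hx
  rw [pow_mem_cyclo_iff hord heps hrho]
  calc m + e * j ≡ m + 0 [MOD eps] := (Nat.modEq_zero_iff_dvd.mpr (hd.mul_right j)).add_left m
    _ ≡ n [MOD eps] := hmn

theorem famU_cycloPartition (hord₁ : orderOf α = e * f) (hord₂ : orderOf α = eps * rho)
    (he : 0 < e) (hf : 0 < f) (hrho : 0 < rho) (hd : eps ∣ e) :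
    famU (cycloPartition α e f eps) = cyclo α eps rho 0 := by
  have heps : 0 < eps := Nat.pos_of_dvd_of_pos hd he
  ext x
  simp only [famU, cycloPartition, mem_biUnion, mem_univ, true_and]
  constructor
  · rintro ⟨i, hi⟩
    exact mem_cyclo_of_dvd hord₂ heps hrho hd (Nat.modEq_zero_iff_dvd.mpr (dvd_mul_right _ _)) hi
  · intro hx
    obtain ⟨k, rfl⟩ := exists_pow_of_mem_cyclo hx
    have hk : eps ∣ k % e := (Nat.dvd_mod_iff hd).mpr
      (Nat.modEq_zero_iff_dvd.mp ((pow_mem_cyclo_iff hord₂ heps hrho).mp hx))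
    refine ⟨⟨k % e / eps, Nat.div_lt_div_of_lt_of_dvd hd (Nat.mod_lt k he)⟩, ?_⟩
    rw [pow_mem_cyclo_iff hord₁ he hf, Nat.mul_div_cancel' hk]
    exact (Nat.mod_modEq k e).symm

theorem disjoint_cycloPartition (hord : orderOf α = e * f) (he : 0 < e) (hf : 0 < f)
    (hd : eps ∣ e) {i j : Fin (e / eps)} (hij : i ≠ j) :
    Disjoint (cycloPartition α e f eps i) (cycloPartition α e f eps j) := by
  have hlt : ∀ i : Fin (e / eps), eps * i < e := fun i => (Nat.lt_div_iff_mul_lt' hd _).mp i.2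
  refine disjoint_cyclo hord he hf fun h => hij (Fin.ext ?_)
  exact Nat.eq_of_mul_eq_mul_left (Nat.pos_of_dvd_of_pos hd he)
    (h.eq_of_lt_of_lt (hlt i) (hlt j))

theorem count_famInt_cycloPartition (hα : IsPrimitiveElt α) (hord₁ : orderOf α = e * f)
    (hord₂ : orderOf α = eps * rho) (he : 0 < e) (hf : 0 < f) (hrho : 0 < rho) (hd : eps ∣ e)
    {m : ℕ} {x : F} (hx0 : x ≠ 0) (hx : x ∈ cyclo α eps rho m) :
    (famInt (cycloPartition α e f eps)).count x = phi α e f eps rho m := by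
  have heps : 0 < eps := Nat.pos_of_dvd_of_pos hd he
  have hα0 := ne_zero_of_orderOf_eq_mul hord₁ he hf
  have hcoset : ∀ i, ∀ v ∈ cycloPartition α e f eps i, ∀ u,
      u ∈ cycloPartition α e f eps i ↔ u / v ∈ cyclo α e f 0 := by
    intro i v hv u
    have hv0 : v ≠ 0 := fun h => zero_notMem_cyclo hα0 _ (h ▸ hv)
    constructor
    · intro hu
      exact div_mem_cyclo hα hord₁ he hf (by rwa [zero_add]) hv
    · intro hu
      have := mul_mem_cyclo hord₁ he hf hu hv
      rwa [zero_add, div_mul_cancel₀ u hv0] at this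
  rw [count_famInt_eq_card_filter _ _ (fun i j => disjoint_cycloPartition hord₁ he hf hd)
    (fun i => zero_notMem_cyclo hα0 _) hcoset hx0, famU_cycloPartition hord₁ hord₂ he hf hrho hd,
    phi, Phi]
  refine congrArg card (filter_congr fun c _ => and_congr_right fun _ => ⟨fun h => ?_, fun h => ?_⟩)
  · have := div_mem_cyclo hα hord₂ heps hrho (m := m) (n := 0) hx h
    rwa [div_div_cancel₀ hx0] at this
  · exact div_mem_cyclo hα hord₂ heps hrho (by rwa [zero_add]) h

end Partition

section Primitive

variable {F : Type*} [Field F] [Fintype F] [DecidableEq F] {α : F}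

theorem IsPrimitiveElt.ne_zero (hα : IsPrimitiveElt α) (hcard : 2 < Fintype.card F) : α ≠ 0 := by
  rintro rfl
  have hsub : (univ : Finset F) ⊆ {0, 1} := fun x _ => by
    by_cases hx : x = 0
    · simp [hx]
    obtain ⟨_ | k, rfl⟩ := hα x hx
    · simp
    · simp at hx
  have := (card_le_card hsub).trans card_le_two
  rw [card_univ] at this
  omega

theorem IsPrimitiveElt.orderOf_eq (hα : IsPrimitiveElt α) (hcard : 2 < Fintype.card F) :
    orderOf α = Fintype.card F - 1 := by
  set g := Units.mk0 α (hα.ne_zero hcard)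
  have hg : ∀ w : Fˣ, w ∈ Submonoid.powers g := fun w => by
    obtain ⟨k, hk⟩ := hα w w.ne_zero
    exact ⟨k, Units.ext (by simp [g, hk])⟩
  rw [← Units.val_mk0 (hα.ne_zero hcard), orderOf_units, orderOf_eq_card_of_forall_mem_powers hg,
    Nat.card_eq_fintype_card, Fintype.card_units]

end Primitive

section PhiConditions

variable {F : Type*} [Field F] [DecidableEq F] {α : F} {e f eps rho : ℕ}

theorem count_famInt_cycloPartition_of_phi_eq_one (hα : IsPrimitiveElt α)
    (hord₁ : orderOf α = e * f) (hord₂ : orderOf α = eps * rho) (he : 0 < e) (hf : 0 < f)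
    (hrho : 0 < rho) (hd : eps ∣ e)
    (hφ : ∀ j, 1 ≤ j → j ≤ eps - 1 → phi α e f eps rho j = phi α e f eps rho 1) (x : F) :
    (famInt (cycloPartition α e f eps)).count x =
      if x ∈ cyclo α eps rho 0 then phi α e f eps rho 0
      else if x = 0 then 0 else phi α e f eps rho 1 := by
  have heps : 0 < eps := Nat.pos_of_dvd_of_pos hd he
  rcases eq_or_ne x 0 with rfl | hx
  · rw [count_famInt_zero, if_neg (zero_notMem_cyclo (ne_zero_of_orderOf_eq_mul hord₂ heps hrho) 0),
      if_pos rfl]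
  obtain ⟨m, hm, hxm⟩ := exists_mem_cyclo_lt hα hord₂ heps hrho hx
  rw [count_famInt_cycloPartition hα hord₁ hord₂ he hf hrho hd hx hxm, if_neg hx]
  split_ifs with hx0
  · rw [(mem_cyclo_zero_iff hord₂ heps hrho hm hxm).mp hx0]
  · have hm0 : m ≠ 0 := mt (mem_cyclo_zero_iff hord₂ heps hrho hm hxm).mpr hx0
    exact hφ m (by omega) (by omega)

theorem count_famInt_cycloPartition_of_phi_eq_zero (hα : IsPrimitiveElt α)
    (hord₁ : orderOf α = e * f) (hord₂ : orderOf α = eps * rho) (he : 0 < e) (hf : 0 < f)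
    (hrho : 0 < rho) (hd : eps ∣ e)
    (hφ : ∀ j, j ≤ eps - 1 → phi α e f eps rho j = phi α e f eps rho 0) (x : F) :
    (famInt (cycloPartition α e f eps)).count x = if x = 0 then 0 else phi α e f eps rho 0 := by
  have heps : 0 < eps := Nat.pos_of_dvd_of_pos hd he
  rcases eq_or_ne x 0 with rfl | hx
  · rw [count_famInt_zero, if_pos rfl]
  obtain ⟨m, hm, hxm⟩ := exists_mem_cyclo_lt hα hord₂ heps hrho hx
  rw [count_famInt_cycloPartition hα hord₁ hord₂ he hf hrho hd hx hxm, if_neg hx]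
  exact hφ m (by omega)

theorem famShape_cycloPartition [Fintype F] (hord : orderOf α = e * f) (he : 0 < e) (hf : 0 < f)
    (hd : eps ∣ e) : FamShape (Fintype.card F) (e / eps) f (cycloPartition α e f eps) :=
  ⟨rfl, Fintype.card_fin _, fun _ => card_cyclo hord he hf _,
    fun _ _ => disjoint_cycloPartition hord he hf hd⟩

end PhiConditions

theorem phi_equal_gives_dpdf_or_ddf_general {F : Type*} [Field F] [Fintype F] [DecidableEq F]
    (q e f eps rho : ℕ) (α : F)
    (hq : Fintype.card F = q) (hα : IsPrimitiveElt α)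
    (hef : q = e * f + 1) (he : 1 < e)
    (herho : q = eps * rho + 1) (hepse : eps ∣ e) :
    ((∀ j, 1 ≤ j → j ≤ eps - 1 → phi α e f eps rho j = phi α e f eps rho 1) →
      ((∀ x : F, (famInt fun i : Fin (e / eps) => cyclo α e f (eps * (i : ℕ))).count x =
          if x ∈ cyclo α eps rho 0 then phi α e f eps rho 0
          else if x = 0 then 0 else phi α e f eps rho 1) ∧
       IsDPDF q (e / eps) f (phi α e f eps rho 0 : ℤ) (phi α e f eps rho 1 : ℤ)
         (fun i : Fin (e / eps) => cyclo α e f (eps * (i : ℕ))) ∧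
       (eps = e → IsPDS q f (phi α e f eps rho 0 : ℤ) (phi α e f eps rho 1 : ℤ)
         (cyclo α eps rho 0)))) ∧
    ((∀ j, j ≤ eps - 1 → phi α e f eps rho j = phi α e f eps rho 0) →
      ((∀ x : F, (famInt fun i : Fin (e / eps) => cyclo α e f (eps * (i : ℕ))).count x =
          if x = 0 then 0 else phi α e f eps rho 0) ∧
       IsDDF q (e / eps) f (phi α e f eps rho 0 : ℤ)
         (fun i : Fin (e / eps) => cyclo α e f (eps * (i : ℕ))) ∧
       (eps = e → IsDS q f (phi α e f eps rho 0 : ℤ) (cyclo α eps rho 0)))) := by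
  have hcard := Fintype.one_lt_card (α := F)
  have he₀ : 0 < e := by omega
  have hpos₁ : 0 < e * f := by omega
  have hpos₂ : 0 < eps * rho := by omega
  have hf : 0 < f := (CanonicallyOrderedAdd.mul_pos.mp hpos₁).2
  have hrho : 0 < rho := (CanonicallyOrderedAdd.mul_pos.mp hpos₂).2
  have hord := hα.orderOf_eq (by nlinarith)
  have hord₁ : orderOf α = e * f := by omega
  have hord₂ : orderOf α = eps * rho := by omega
  have hshape := hq ▸ famShape_cycloPartition hord₁ he₀ hf hepse
  have hU := famU_cycloPartition hord₁ hord₂ he₀ hf hrho hepse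
  have h0 : ∀ i, (0 : F) ∉ cycloPartition α e f eps i :=
    fun _ => zero_notMem_cyclo (ne_zero_of_orderOf_eq_mul hord₁ he₀ hf) _
  have hone : eps = e → e / eps = 1 := fun h => by rw [h, Nat.div_self he₀]
  refine ⟨fun hφ => ?_, fun hφ => ?_⟩
  · have hc := count_famInt_cycloPartition_of_phi_eq_one hα hord₁ hord₂ he₀ hf hrho hepse hφ
    have hD : IsDPDF q (e / eps) f (phi α e f eps rho 0 : ℤ) (phi α e f eps rho 1 : ℤ)
        (cycloPartition α e f eps) :=
      ⟨hshape, h0, fun x => by rw [hU, hc x]; split_ifs <;> rfl⟩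
    exact ⟨hc, hD, fun h => hU ▸ hD.isPDS_famU (hone h)⟩
  · have hc := count_famInt_cycloPartition_of_phi_eq_zero hα hord₁ hord₂ he₀ hf hrho hepse hφ
    have hD : IsDDF q (e / eps) f (phi α e f eps rho 0 : ℤ) (cycloPartition α e f eps) :=
      ⟨hshape, fun x => by rw [hc x]; split_ifs <;> rfl⟩
    exact ⟨hc, hD, fun h => hU ▸ hD.isDS_famU (hone h)⟩

/-- Theorem: let `q = ef+1 = ερ+1` be a prime power with `ε ∣ e`.
(i) If `φ₁ = ⋯ = φ_{ε-1}` then `Int(C₀^ε′) = φ₀(C₀^ε) + φ₁(G* \ C₀^ε)`, i.e. `C₀^ε′` is a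
DPDF (and `C₀^ε` is a PDS when `ε = e`).
(ii) If `φ₀ = φ₁ = ⋯ = φ_{ε-1}` then `Int(C₀^ε′) = φ₀(G*)`, i.e. `C₀^ε′` is a DDF
(and `C₀^ε` is a DS when `ε = e`). -/
theorem phi_equal_gives_dpdf_or_ddf {F : Type*} [Field F] [Fintype F] [DecidableEq F]
    (q e f eps rho : ℕ) (α : F)
    (hq : Fintype.card F = q) (hα : IsPrimitiveElt α)
    (hef : q = e * f + 1) (he : 1 < e) (hf : 1 < f)
    (herho : q = eps * rho + 1) (hepse : eps ∣ e) (heps : 1 < eps) (hrho : 1 < rho) :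
    ((∀ j, 1 ≤ j → j ≤ eps - 1 → phi α e f eps rho j = phi α e f eps rho 1) →
      ((∀ x : F, (famInt fun i : Fin (e / eps) => cyclo α e f (eps * (i : ℕ))).count x =
          if x ∈ cyclo α eps rho 0 then phi α e f eps rho 0
          else if x = 0 then 0 else phi α e f eps rho 1) ∧
       IsDPDF q (e / eps) f (phi α e f eps rho 0 : ℤ) (phi α e f eps rho 1 : ℤ)
         (fun i : Fin (e / eps) => cyclo α e f (eps * (i : ℕ))) ∧
       (eps = e → IsPDS q f (phi α e f eps rho 0 : ℤ) (phi α e f eps rho 1 : ℤ)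
         (cyclo α eps rho 0)))) ∧
    ((∀ j, j ≤ eps - 1 → phi α e f eps rho j = phi α e f eps rho 0) →
      ((∀ x : F, (famInt fun i : Fin (e / eps) => cyclo α e f (eps * (i : ℕ))).count x =
          if x = 0 then 0 else phi α e f eps rho 0) ∧
       IsDDF q (e / eps) f (phi α e f eps rho 0 : ℤ)
         (fun i : Fin (e / eps) => cyclo α e f (eps * (i : ℕ))) ∧
       (eps = e → IsDS q f (phi α e f eps rho 0 : ℤ) (cyclo α eps rho 0)))) :=
  phi_equal_gives_dpdf_or_ddf_general q e f eps rho α hq hα hef he herho hepse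
end

section
/- Let q′ = pⁿ where p is prime, and let e ≥ 3 be a divisor of q′ − 1. Then the following two conditions are equivalent: (i) −1 is congruent to a power of p modulo e (i.e. there exists s ≥ 1 with p^s ≡ −1 (mod e)); (ii) there exists a prime power q such that q′ = q^{2b} for some positive integer b and e divides q + 1. -/
open Finset

/-! The class of `p` in `ℤ/e` has some order `d ∣ n`. If `p ^ s ≡ -1`, then `d ∣ 2s` but `d ∤ s`,
which forces `d = 2c` with `c = s mod d`, so `p ^ c ≡ -1` and `q = p ^ c`, `b = n / d` work.
Conversely `q` must be a power `p ^ a` of `p` itself, and `s = a` works. -/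

theorem Nat.two_mul_mod_eq_of_dvd_two_mul {d s : ℕ} (h2 : d ∣ 2 * s) (h1 : ¬d ∣ s) :
    2 * (s % d) = d := by
  have hd : 0 < d := Nat.pos_of_ne_zero (by rintro rfl; exact h1 (by simpa using h2))
  have hr : 0 < s % d := Nat.pos_of_ne_zero fun h => h1 (Nat.dvd_of_mod_eq_zero h)
  have h2r : d ∣ 2 * (s % d) := by
    have : 2 * s = d * (2 * (s / d)) + 2 * (s % d) := by have := Nat.div_add_mod s d; linarith
    exact (Nat.dvd_add_right (Dvd.intro _ rfl)).mp (this ▸ h2)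
  exact Nat.eq_of_dvd_of_lt_two_mul (by omega) h2r (by have := Nat.mod_lt s hd; omega)

theorem exists_orderOf_eq_two_mul_pow_eq_neg_one {R : Type*} [Ring R] (hR : (-1 : R) ≠ 1)
    {x : R} {s : ℕ} (hs : x ^ s = -1) : ∃ c, orderOf x = 2 * c ∧ x ^ c = -1 := by
  have h2 : orderOf x ∣ 2 * s := orderOf_dvd_of_pow_eq_one (by rw [pow_mul', hs, neg_one_sq])
  have h1 : ¬orderOf x ∣ s := fun h => hR (hs ▸ orderOf_dvd_iff_pow_eq_one.mp h)
  exact ⟨s % orderOf x, (Nat.two_mul_mod_eq_of_dvd_two_mul h2 h1).symm, by rw [pow_mod_orderOf, hs]⟩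

theorem ZMod.natCast_pow_eq_neg_one_iff {e p s : ℕ} : (p : ZMod e) ^ s = -1 ↔ e ∣ p ^ s + 1 := by
  rw [← ZMod.natCast_eq_zero_iff, eq_neg_iff_add_eq_zero]
  push_cast
  rfl

theorem ZMod.natCast_eq_one_of_dvd_sub_one {e a : ℕ} (ha : 1 ≤ a) (h : e ∣ a - 1) :
    (a : ZMod e) = 1 := by
  rw [← Nat.cast_one, ZMod.natCast_eq_natCast_iff]
  exact ((Nat.modEq_iff_dvd' ha).mpr h).symm

theorem Nat.Prime.eq_of_pow_eq_pow {p ℓ m n : ℕ} (hp : p.Prime) (hℓ : ℓ.Prime) (hm : m ≠ 0)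
    (h : p ^ n = ℓ ^ m) : p = ℓ :=
  ((Nat.prime_dvd_prime_iff_eq hℓ hp).mp (hℓ.dvd_of_dvd_pow (h ▸ dvd_pow_self ℓ hm))).symm

/-- Lemma: for `q′ = pⁿ` (`p` prime) and `e ≥ 3` dividing `q′ - 1`, the following are
equivalent: (i) some power of `p` is congruent to `-1` modulo `e`; (ii) there is a prime power
`q` with `q′ = q^(2b)` for some `b ≥ 1` and `e ∣ q + 1`. -/
theorem neg_one_power_iff_square_form (p n e : ℕ)
    (hp : p.Prime) (hn : 0 < n) (he : 3 ≤ e) (hdvd : e ∣ p ^ n - 1) :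
    (∃ s : ℕ, 1 ≤ s ∧ e ∣ p ^ s + 1) ↔
    (∃ q b : ℕ, IsPrimePow q ∧ 0 < b ∧ p ^ n = q ^ (2 * b) ∧ e ∣ q + 1) := by
  constructor
  · rintro ⟨s, -, hs⟩
    have : Fact (2 < e) := ⟨he⟩
    have hpn : (p : ZMod e) ^ n = 1 := by
      exact_mod_cast ZMod.natCast_eq_one_of_dvd_sub_one (Nat.one_le_pow _ _ hp.pos) hdvd
    obtain ⟨c, hc, hpc⟩ := exists_orderOf_eq_two_mul_pow_eq_neg_one ZMod.neg_one_ne_one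
      (ZMod.natCast_pow_eq_neg_one_iff.mpr hs)
    obtain ⟨b, hb⟩ := orderOf_dvd_of_pow_eq_one hpn
    rw [hc] at hb
    obtain ⟨hc0, hb0⟩ : 0 < c ∧ 0 < b := by simpa [hb, CanonicallyOrderedAdd.mul_pos] using hn
    refine ⟨p ^ c, b, ⟨p, c, hp.prime, hc0, rfl⟩, hb0, ?_, ZMod.natCast_pow_eq_neg_one_iff.mp hpc⟩
    rw [← pow_mul, hb, mul_left_comm, mul_assoc]
  · rintro ⟨_, b, ⟨ℓ, a, hℓ, ha, rfl⟩, hb, hpn, hdvd⟩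
    rw [← pow_mul] at hpn
    obtain rfl := hp.eq_of_pow_eq_pow hℓ.nat_prime (by positivity) hpn
    exact ⟨a, ha, hdvd⟩
end
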